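/- arXiv:2006.09467 — 5 statements merged into one kernel-verified Lean document; each statement's English description precedes it below -/
import Mathlib

section
/- Let D be a 0–1 dataset with M rows and let o : Fin M → columns and v : Fin M → columns be two injective indexings of columns (the two column blocks O and V). Suppose fr(D;{o i}) = 1 and fr(D;{v i}) = 1 for all i, and fr(D;{o i, o j}) = 0 and fr(D;{v i, v j}) = 0 for all i ≠ j. Then for every i ∈ Fin M there is a unique j ∈ Fin M such that some row t has D t (o i) = 1 and D t (v j) = 1, and the resulting map σ : Fin M → Fin M defined by σ(i) = j is a bijection. -/
/-!
A column of frequency one has a single row carrying its 1, so each block `O`, `V` determines a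
row map `r`, `s : Fin M → Fin M`, and frequency zero for pairs of distinct columns makes these
maps injective, hence bijective. A row has a 1 in both `o i` and `v j` exactly when
`s j = r i`, so the partner of `i` is `s⁻¹ (r i)`, and any `σ` pairing every `i` with a partner
satisfies `s ∘ σ = r`.
-/

open Function

section Rows

variable {ι α : Type*} {R : ι → α → Prop}

theorem exists_eq_iff_of_natCard_eq_one (h : ∀ i, Nat.card {t // R i t} = 1) :
    ∃ r : ι → α, ∀ i t, R i t ↔ r i = t := by
  choose x hx using fun i => Nat.card_eq_one_iff_exists.mp (h i)
  refine ⟨fun i => (x i).val, fun i t => ⟨fun ht => ?_, fun ht => ht ▸ (x i).property⟩⟩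
  exact congrArg Subtype.val (hx i ⟨t, ht⟩).symm

theorem injective_of_natCard_and_eq_zero [Finite α] {r : ι → α} (hr : ∀ i t, R i t ↔ r i = t)
    (h : ∀ i j, i ≠ j → Nat.card {t // R i t ∧ R j t} = 0) : Injective r := by
  intro i j hij
  by_contra hne
  have hempty := Finite.card_eq_zero_iff.mp (h i j hne)
  exact hempty.false ⟨r i, (hr i _).mpr rfl, (hr j _).mpr hij.symm⟩

end Rows

theorem permutation_from_two_blocks_general (M n : ℕ) (D : Fin M → Fin n → Bool)
    (o v : Fin M → Fin n)
    (ho1 : ∀ i : Fin M, Nat.card {t : Fin M // D t (o i) = true} = 1)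
    (hv1 : ∀ i : Fin M, Nat.card {t : Fin M // D t (v i) = true} = 1)
    (ho2 : ∀ i j : Fin M, i ≠ j →
      Nat.card {t : Fin M // D t (o i) = true ∧ D t (o j) = true} = 0)
    (hv2 : ∀ i j : Fin M, i ≠ j →
      Nat.card {t : Fin M // D t (v i) = true ∧ D t (v j) = true} = 0) :
    (∀ i : Fin M, ∃! j : Fin M, ∃ t : Fin M, D t (o i) = true ∧ D t (v j) = true) ∧
    (∀ σ : Fin M → Fin M,
      (∀ i : Fin M, ∃ t : Fin M, D t (o i) = true ∧ D t (v (σ i)) = true) →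
      Function.Bijective σ) := by
  obtain ⟨r, hr⟩ := exists_eq_iff_of_natCard_eq_one ho1
  obtain ⟨s, hs⟩ := exists_eq_iff_of_natCard_eq_one hv1
  have hr_inj : Injective r := injective_of_natCard_and_eq_zero hr ho2
  have hs_bij : Bijective s :=
    Finite.injective_iff_bijective.mp (injective_of_natCard_and_eq_zero hs hv2)
  have common_row_iff (i j : Fin M) :
      (∃ t, D t (o i) = true ∧ D t (v j) = true) ↔ s j = r i := by
    simp only [hr, hs, exists_eq_left']
  simp only [common_row_iff]
  refine ⟨fun i => hs_bij.existsUnique (r i), fun σ hσ => ?_⟩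
  have hcomp : s ∘ σ = r := funext hσ
  exact Finite.injective_iff_bijective.mp (Injective.of_comp (f := s) (hcomp ▸ hr_inj))

/-- Given two "permutation matrix" column blocks `O` and `V`
(each column has frequency 1, each pair of distinct columns of the same block
has frequency 0), for every `i` there is a unique `j` such that some row has a 1
in both column `o i` and column `v j`, and the resulting map `σ` is a bijection. -/
theorem permutation_from_two_blocks (M n : ℕ) (D : Fin M → Fin n → Bool)
    (o v : Fin M → Fin n) (ho : Function.Injective o) (hv : Function.Injective v)
    (ho1 : ∀ i : Fin M, Nat.card {t : Fin M // D t (o i) = true} = 1)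
    (hv1 : ∀ i : Fin M, Nat.card {t : Fin M // D t (v i) = true} = 1)
    (ho2 : ∀ i j : Fin M, i ≠ j →
      Nat.card {t : Fin M // D t (o i) = true ∧ D t (o j) = true} = 0)
    (hv2 : ∀ i j : Fin M, i ≠ j →
      Nat.card {t : Fin M // D t (v i) = true ∧ D t (v j) = true} = 0) :
    (∀ i : Fin M, ∃! j : Fin M, ∃ t : Fin M, D t (o i) = true ∧ D t (v j) = true) ∧
    (∀ σ : Fin M → Fin M,
      (∀ i : Fin M, ∃ t : Fin M, D t (o i) = true ∧ D t (v (σ i)) = true) →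
      Function.Bijective σ) :=
  permutation_from_two_blocks_general M n D o v ho1 hv1 ho2 hv2
end

section
/- Let D be a 0–1 dataset and let x, y, b be three distinct columns such that fr(D;{x}) = 1, fr(D;{y}) = 1, fr(D;{x,y}) = 0, fr(D;{b}) = 2, fr(D;{b,x}) = 1 and fr(D;{b,y}) = 1. Then for every row t, D t b = 1 if and only if D t x = 1 or D t y = 1; that is, column b is exactly the entrywise OR of columns x and y. -/
namespace Finset

variable {α : Type*} [DecidableEq α]

theorem subset_of_card_inter_eq {s u : Finset α} (h : #(u ∩ s) = #s) : s ⊆ u :=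
  inter_eq_right.mp (eq_of_subset_of_card_le inter_subset_right h.ge)

theorem eq_union_of_card_inter_eq {s t u : Finset α} (hst : Disjoint s t)
    (hs : #(u ∩ s) = #s) (ht : #(u ∩ t) = #t) (hu : #u = #s + #t) : u = s ∪ t :=
  have hsub : s ∪ t ⊆ u :=
    union_subset (subset_of_card_inter_eq hs) (subset_of_card_inter_eq ht)
  (eq_of_subset_of_card_le hsub (by rw [card_union_of_disjoint hst, hu])).symm

end Finset

open Finset in
theorem column_is_or_general (m n : ℕ) (D : Fin m → Fin n → Bool) (x y b : Fin n)
    (hx : Nat.card {t : Fin m // D t x = true} = 1)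
    (hy : Nat.card {t : Fin m // D t y = true} = 1)
    (hxy0 : Nat.card {t : Fin m // D t x = true ∧ D t y = true} = 0)
    (hb : Nat.card {t : Fin m // D t b = true} = 2)
    (hbx : Nat.card {t : Fin m // D t b = true ∧ D t x = true} = 1)
    (hby : Nat.card {t : Fin m // D t b = true ∧ D t y = true} = 1) :
    ∀ t : Fin m, D t b = true ↔ (D t x = true ∨ D t y = true) := by
  let rows (c : Fin n) : Finset (Fin m) := univ.filter (D · c = true)
  simp only [Nat.card_eq_fintype_card, Fintype.card_subtype, filter_and] at hx hy hxy0 hb hbx hby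
  have hdisj : Disjoint (rows x) (rows y) :=
    disjoint_iff_inter_eq_empty.mpr (card_eq_zero.mp hxy0)
  have hcol : rows b = rows x ∪ rows y :=
    eq_union_of_card_inter_eq hdisj (hbx.trans hx.symm) (hby.trans hy.symm)
      (by simp only [rows, hb, hx, hy])
  intro t
  simpa [rows] using congrArg (t ∈ ·) hcol

/-- If `fr({x}) = fr({y}) = 1`, `fr({x,y}) = 0`, `fr({b}) = 2`,
`fr({b,x}) = fr({b,y}) = 1`, then column `b` is exactly the entrywise OR of
columns `x` and `y`. -/
theorem column_is_or (m n : ℕ) (D : Fin m → Fin n → Bool) (x y b : Fin n)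
    (hxy : x ≠ y) (hxb : x ≠ b) (hyb : y ≠ b)
    (hx : Nat.card {t : Fin m // D t x = true} = 1)
    (hy : Nat.card {t : Fin m // D t y = true} = 1)
    (hxy0 : Nat.card {t : Fin m // D t x = true ∧ D t y = true} = 0)
    (hb : Nat.card {t : Fin m // D t b = true} = 2)
    (hbx : Nat.card {t : Fin m // D t b = true ∧ D t x = true} = 1)
    (hby : Nat.card {t : Fin m // D t b = true ∧ D t y = true} = 1) :
    ∀ t : Fin m, D t b = true ↔ (D t x = true ∨ D t y = true) :=
  column_is_or_general m n D x y b hx hy hxy0 hb hbx hby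
end

section
/- Let G be a simple graph on vertex set Fin M with M ≥ 3. Construct the following 0–1 constraint system with M rows and six column groups: O = (o_i)_{i ∈ Fin M}, V = (v_i)_{i ∈ Fin M}, B = (b_i)_{i ∈ Fin M}, C = (c_P) indexed by unordered pairs P = {j,k} of distinct vertices, and S = (s_{i,P}) and E = (e_{i,P}) each indexed by pairs (i,P) with i ∈ Fin M and P = {j,k} a non-edge of G. Impose the itemset frequency constraints (indices of b taken modulo M): fr({o_i}) = 1 and fr({o_i,o_j}) = 0 for i ≠ j; fr({v_i}) = 1 and fr({v_i,v_j}) = 0 for i ≠ j; fr({b_i}) = 2, fr({b_i,o_i}) = 1, fr({b_i,o_{i+1}}) = 1; for P = {j,k}: fr({c_P}) = 2, fr({c_P,v_j}) = 1, fr({c_P,v_k}) = 1; for each non-edge P and each i: fr({s_{i,P}}) = 1, fr({s_{i,P},b_i}) = 1, fr({s_{i,P},c_P}) = 0; and fr({e_{i,P}}) = M − 1, fr({s_{i,P},e_{i,P}}) = 0. Then for every 0–1 dataset D with M rows satisfying all these constraints, the map σ : Fin M → Fin M defined by σ(i) = the unique j such that some row contains a 1 in both column o_i and column v_j is a well-defined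 bijection, and for every i ∈ Fin M the vertices σ(i) and σ(i+1 mod M) are adjacent in G; that is, σ traces a Hamiltonian cycle of G. -/
/-!
The `o` and `v` columns each form a permutation matrix, so each row `t` is the row of exactly one
`o i` and exactly one `v j`; the map `σ` pairs them up through their common row and is therefore a
bijection. The two rows of `b i` are the rows of `o i` and `o (i+1)`, i.e. of `v (σ i)` and
`v (σ (i+1))`. If these two vertices were not adjacent, the pair `P = {σ i, σ (i+1)}` would be a
non-edge, and `c P` would occupy the same two rows as `b i`; the row of `s i P` lies in `b i`, hence
in `c P`, contradicting `fr({s i P, c P}) = 0`.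
-/

/-- The columns of the Hamiltonian-cycle reduction constraint system for a graph
`G` on `Fin M`: groups `O`, `V`, `B` indexed by `Fin M`, group `C` indexed by
unordered pairs of distinct vertices, and groups `S`, `E` indexed by pairs
`(i, P)` with `i ∈ Fin M` and `P` a non-edge of `G`. -/
inductive Col (M : ℕ) (G : SimpleGraph (Fin M)) : Type where
  | o : Fin M → Col M G
  | v : Fin M → Col M G
  | b : Fin M → Col M G
  | c : {P : Sym2 (Fin M) // ¬ P.IsDiag} → Col M G
  | s : Fin M → {P : Sym2 (Fin M) // ¬ P.IsDiag ∧ P ∉ G.edgeSet} → Col M G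
  | e : Fin M → {P : Sym2 (Fin M) // ¬ P.IsDiag ∧ P ∉ G.edgeSet} → Col M G

/-- The frequency of the singleton itemset `{x}` in the dataset `D`:
the number of rows having a 1 in column `x`. -/
noncomputable def fr1 {M : ℕ} {α : Type*} (D : Fin M → α → Bool) (x : α) : ℕ :=
  Nat.card {t : Fin M // D t x = true}

/-- The frequency of the two-element itemset `{x, y}` in the dataset `D`:
the number of rows having a 1 in both columns `x` and `y`. -/
noncomputable def fr2 {M : ℕ} {α : Type*} (D : Fin M → α → Bool) (x y : α) : ℕ :=
  Nat.card {t : Fin M // D t x = true ∧ D t y = true}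

/-- A 0–1 dataset `D` with `M` rows satisfies the itemset frequency constraints of
the Hamiltonian-cycle reduction for `G` (indices of the `b` columns taken mod `M`). -/
def Satisfies (M : ℕ) [NeZero M] (G : SimpleGraph (Fin M)) (D : Fin M → Col M G → Bool) : Prop :=
  (∀ i, fr1 D (Col.o i) = 1) ∧
  (∀ i j, i ≠ j → fr2 D (Col.o i) (Col.o j) = 0) ∧
  (∀ i, fr1 D (Col.v i) = 1) ∧
  (∀ i j, i ≠ j → fr2 D (Col.v i) (Col.v j) = 0) ∧
  (∀ i, fr1 D (Col.b i) = 2) ∧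
  (∀ i, fr2 D (Col.b i) (Col.o i) = 1) ∧
  (∀ i, fr2 D (Col.b i) (Col.o (i + 1)) = 1) ∧
  (∀ P, fr1 D (Col.c P) = 2) ∧
  (∀ (P : {P : Sym2 (Fin M) // ¬ P.IsDiag}) (j : Fin M),
      j ∈ P.val → fr2 D (Col.c P) (Col.v j) = 1) ∧
  (∀ i P, fr1 D (Col.s i P) = 1) ∧
  (∀ i P, fr2 D (Col.s i P) (Col.b i) = 1) ∧
  (∀ (i : Fin M) (P : {P : Sym2 (Fin M) // ¬ P.IsDiag ∧ P ∉ G.edgeSet}),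
      fr2 D (Col.s i P) (Col.c ⟨P.val, P.prop.1⟩) = 0) ∧
  (∀ i P, fr1 D (Col.e i P) = M - 1) ∧
  (∀ i P, fr2 D (Col.s i P) (Col.e i P) = 0)

section Frequency

variable {M : ℕ} {α : Type*} {D : Fin M → α → Bool}

theorem existsUnique_of_fr1_eq_one {x : α} (h : fr1 D x = 1) : ∃! t, D t x = true := by
  obtain ⟨hsub, ⟨t, ht⟩⟩ := Nat.card_eq_one_iff_unique.mp h
  exact ⟨t, ht, fun t' ht' => congrArg Subtype.val (hsub.allEq ⟨t', ht'⟩ ⟨t, ht⟩)⟩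

theorem not_and_of_fr2_eq_zero {x y : α} (h : fr2 D x y = 0) (t : Fin M) :
    ¬ (D t x = true ∧ D t y = true) := fun ht =>
  Nat.pos_iff_ne_zero.mp (Nat.card_pos_iff.mpr ⟨⟨⟨t, ht⟩⟩, inferInstance⟩) h

theorem exists_of_fr2_eq_one {x y : α} (h : fr2 D x y = 1) :
    ∃ t, D t x = true ∧ D t y = true :=
  let ⟨t, ht⟩ := (Nat.card_eq_one_iff_unique.mp h).2.some
  ⟨t, ht⟩

theorem rows_subset_of_fr1_eq_two {x y : α} (h : fr1 D x = 2) {a b : Fin M} (hab : a ≠ b)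
    (hax : D a x = true) (hbx : D b x = true) (hay : D a y = true) (hby : D b y = true)
    {t : Fin M} (htx : D t x = true) : D t y = true := by
  obtain ⟨_, -, hunique⟩ := (Nat.card_eq_two_iff' (⟨a, hax⟩ : {t // D t x = true})).mp h
  by_cases hta : t = a
  · exact hta ▸ hay
  · have htb : (⟨t, htx⟩ : {t // D t x = true}) = ⟨b, hbx⟩ :=
      (hunique _ (by simpa using hta)).trans (hunique _ (by simpa using hab.symm)).symm
    rw [Subtype.mk.injEq] at htb
    exact htb ▸ hby

end Frequency

def IsPermColumns {M : ℕ} {ι α : Type*} (D : Fin M → α → Bool) (f : ι → α) : Prop :=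
  (∀ i, fr1 D (f i) = 1) ∧ ∀ i j, i ≠ j → fr2 D (f i) (f j) = 0

namespace IsPermColumns

variable {M : ℕ} {ι α : Type*} {D : Fin M → α → Bool} {f : ι → α}

theorem row_eq (h : IsPermColumns D f) {i : ι} {t t' : Fin M}
    (ht : D t (f i) = true) (ht' : D t' (f i) = true) : t = t' :=
  (existsUnique_of_fr1_eq_one (h.1 i)).unique ht ht'

theorem index_eq (h : IsPermColumns D f) {i j : ι} {t : Fin M}
    (hi : D t (f i) = true) (hj : D t (f j) = true) : i = j := by
  by_contra hij
  exact not_and_of_fr2_eq_zero (h.2 i j hij) t ⟨hi, hj⟩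

/-- With as many columns as rows, the injective map from columns to their rows is onto. -/
theorem existsUnique_index {f : Fin M → α} (h : IsPermColumns D f) (t : Fin M) :
    ∃! j, D t (f j) = true := by
  choose row hrow using fun j => (existsUnique_of_fr1_eq_one (h.1 j)).exists
  have hinj : Function.Injective row := fun j k hjk =>
    h.index_eq (hrow j) (hjk ▸ hrow k)
  obtain ⟨j, rfl⟩ := Finite.injective_iff_surjective.mp hinj t
  exact ⟨j, hrow j, fun k hk => h.index_eq hk (hrow j)⟩

end IsPermColumns

theorem Fin.ne_add_one {M : ℕ} [NeZero M] (hM : 2 ≤ M) (i : Fin M) : i ≠ i + 1 := by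
  rw [ne_eq, left_eq_add, Fin.ext_iff, Fin.val_one', Fin.val_zero, Nat.mod_eq_of_lt hM]
  omega

namespace Satisfies

variable {M : ℕ} [NeZero M] {G : SimpleGraph (Fin M)} {D : Fin M → Col M G → Bool}

theorem isPermColumns_o (hD : Satisfies M G D) : IsPermColumns D (Col.o (G := G)) :=
  let ⟨ho, hoo, _⟩ := hD
  ⟨ho, hoo⟩

theorem isPermColumns_v (hD : Satisfies M G D) : IsPermColumns D (Col.v (G := G)) :=
  let ⟨_, _, hv, hvv, _⟩ := hD
  ⟨hv, hvv⟩

theorem existsUnique_v_of_o (hD : Satisfies M G D) (i : Fin M) :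
    ∃! j, ∃ t, D t (Col.o i) = true ∧ D t (Col.v j) = true := by
  obtain ⟨t, hto, -⟩ := existsUnique_of_fr1_eq_one (hD.isPermColumns_o.1 i)
  obtain ⟨j, htj, -⟩ := hD.isPermColumns_v.existsUnique_index t
  refine ⟨j, ⟨t, hto, htj⟩, fun k ⟨t', ht'o, ht'k⟩ => ?_⟩
  rw [hD.isPermColumns_o.row_eq ht'o hto] at ht'k
  exact hD.isPermColumns_v.index_eq ht'k htj

variable {σ : Fin M → Fin M}

theorem injective_of_o_v (hD : Satisfies M G D)
    (hσ : ∀ i, ∃ t, D t (Col.o i) = true ∧ D t (Col.v (σ i)) = true) :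
    Function.Injective σ := by
  intro i j hij
  obtain ⟨t, hto, htv⟩ := hσ i
  obtain ⟨t', ht'o, ht'v⟩ := hσ j
  rw [← hij] at ht'v
  rw [hD.isPermColumns_v.row_eq ht'v htv] at ht'o
  exact hD.isPermColumns_o.index_eq hto ht'o

theorem b_of_o (hD : Satisfies M G D) {i t : Fin M} (hto : D t (Col.o i) = true) :
    D t (Col.b i) = true := by
  have ⟨_, _, _, _, _, hbo, _⟩ := hD
  obtain ⟨t', ht'b, ht'o⟩ := exists_of_fr2_eq_one (hbo i)
  rwa [hD.isPermColumns_o.row_eq hto ht'o]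

theorem b_of_o_succ (hD : Satisfies M G D) {i t : Fin M} (hto : D t (Col.o (i + 1)) = true) :
    D t (Col.b i) = true := by
  have ⟨_, _, _, _, _, _, hbo, _⟩ := hD
  obtain ⟨t', ht'b, ht'o⟩ := exists_of_fr2_eq_one (hbo i)
  rwa [hD.isPermColumns_o.row_eq hto ht'o]

theorem c_of_v (hD : Satisfies M G D) {P : {P : Sym2 (Fin M) // ¬ P.IsDiag}} {j t : Fin M}
    (hj : j ∈ P.val) (htv : D t (Col.v j) = true) : D t (Col.c P) = true := by
  have ⟨_, _, _, _, _, _, _, _, hcv, _⟩ := hD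
  obtain ⟨t', ht'c, ht'v⟩ := exists_of_fr2_eq_one (hcv P j hj)
  rwa [hD.isPermColumns_v.row_eq htv ht'v]

theorem not_b_subset_c (hD : Satisfies M G D) (i : Fin M)
    (P : {P : Sym2 (Fin M) // ¬ P.IsDiag ∧ P ∉ G.edgeSet}) :
    ¬ ∀ t, D t (Col.b i) = true → D t (Col.c ⟨P.val, P.prop.1⟩) = true := by
  have ⟨_, _, _, _, _, _, _, _, _, _, hsb, hsc, _⟩ := hD
  intro hsub
  obtain ⟨t, hts, htb⟩ := exists_of_fr2_eq_one (hsb i P)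
  exact not_and_of_fr2_eq_zero (hsc i P) t ⟨hts, hsub t htb⟩

theorem adj_of_o_v (hD : Satisfies M G D) (hM : 2 ≤ M)
    (hσ : ∀ i, ∃ t, D t (Col.o i) = true ∧ D t (Col.v (σ i)) = true) (i : Fin M) :
    G.Adj (σ i) (σ (i + 1)) := by
  by_contra hnadj
  have hne : σ i ≠ σ (i + 1) := (hD.injective_of_o_v hσ).ne (Fin.ne_add_one hM i)
  let P : {P : Sym2 (Fin M) // ¬ P.IsDiag ∧ P ∉ G.edgeSet} :=
    ⟨s(σ i, σ (i + 1)), Sym2.mk_isDiag_iff.not.mpr hne, hnadj⟩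
  obtain ⟨t, hto, htv⟩ := hσ i
  obtain ⟨t', ht'o, ht'v⟩ := hσ (i + 1)
  have htt' : t ≠ t' := fun h =>
    Fin.ne_add_one hM i (hD.isPermColumns_o.index_eq hto (h ▸ ht'o))
  have ⟨_, _, _, _, hb, _⟩ := hD
  exact hD.not_b_subset_c i P fun _ => rows_subset_of_fr1_eq_two (hb i) htt'
    (hD.b_of_o hto) (hD.b_of_o_succ ht'o)
    (hD.c_of_v (Sym2.mem_mk_left _ _) htv) (hD.c_of_v (Sym2.mem_mk_right _ _) ht'v)

end Satisfies

/-- For every 0–1 dataset `D` with `M` rows satisfying all the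
constraints of the Hamiltonian-cycle reduction for `G`, the map `σ` defined by
`σ i = ` the unique `j` such that some row has a 1 in both column `o i` and
column `v j` is a well-defined bijection, and consecutive vertices `σ i`,
`σ (i+1)` are always adjacent in `G`; i.e. `σ` traces a Hamiltonian cycle of `G`. -/
theorem constraints_give_hamiltonian_cycle (M : ℕ) [NeZero M] (hM : 3 ≤ M)
    (G : SimpleGraph (Fin M)) (D : Fin M → Col M G → Bool)
    (hD : Satisfies M G D) :
    (∀ i : Fin M, ∃! j : Fin M,
      ∃ t : Fin M, D t (Col.o i) = true ∧ D t (Col.v j) = true) ∧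
    (∀ σ : Fin M → Fin M,
      (∀ i : Fin M, ∃ t : Fin M, D t (Col.o i) = true ∧ D t (Col.v (σ i)) = true) →
      Function.Bijective σ ∧ ∀ i : Fin M, G.Adj (σ i) (σ (i + 1))) :=
  ⟨hD.existsUnique_v_of_o, fun _ hσ =>
    ⟨Finite.injective_iff_bijective.mp (hD.injective_of_o_v hσ), hD.adj_of_o_v (by omega) hσ⟩⟩
end

section
/- Let G be a simple graph on vertex set Fin M with M ≥ 3, let N be its number of edges and L = M(M−1)/2 − N its number of non-edges, and consider the constraint system of the Hamiltonian-cycle reduction (column groups O, V, B, C, S, E with the itemset frequency constraints fr({o_i}) = 1, fr({o_i,o_j}) = 0 (i≠j), fr({v_i}) = 1, fr({v_i,v_j}) = 0 (i≠j), fr({b_i}) = 2, fr({b_i,o_i}) = fr({b_i,o_{i+1 mod M}}) = 1, fr({c_{\{j,k\}}}) = 2, fr({c_{\{j,k\}},v_j}) = fr({c_{\{j,k\}},v_k}) = 1, and for each non-edge P and each i: fr({s_{i,P}}) = 1, fr({s_{i,P},b_i}) = 1, fr({s_{i,P},c_P}) = 0, fr({e_{i,P}}) = M−1, fr({s_{i,P},e_{i,P}})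 = 0). Fix a Hamiltonian cycle H of G. Then the number of 0–1 datasets with M rows that satisfy all the constraints and whose induced cyclic ordering σ (defined by σ(i) = the unique j such that some row contains a 1 in both o_i and v_j) traces the cycle H is exactly M! · 2M · 2^{(M−4)L}; in particular this number is the same for every Hamiltonian cycle of G. -/
open Finset

lemma Finset.card_singleton_inter_eq_one_iff {β : Type*} [DecidableEq β] {a : β}
    {s : Finset β} : #({a} ∩ s) = 1 ↔ a ∈ s := by
  by_cases h : a ∈ s <;> simp [h]

lemma Finset.card_singleton_inter_eq_zero_iff {β : Type*} [DecidableEq β] {a : β}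
    {s : Finset β} : #({a} ∩ s) = 0 ↔ a ∉ s := by
  by_cases h : a ∈ s <;> simp [h]

lemma SimpleGraph.card_nonEdge {V : Type*} [Fintype V] [DecidableEq V] (G : SimpleGraph V)
    [DecidableRel G.Adj] :
    Nat.card {P : Sym2 V // ¬ P.IsDiag ∧ P ∉ G.edgeSet} =
      (Fintype.card V).choose 2 - #G.edgeFinset := by
  rw [← card_edgeFinset_top_eq_card_choose_two,
    ← card_sdiff_of_subset (edgeFinset_mono le_top), Nat.card_eq_fintype_card,
    Fintype.card_subtype]
  congr 1
  ext P
  simp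

section Frequency

variable {M : ℕ} {α : Type*}

def rows (D : Fin M → α → Bool) (x : α) : Finset (Fin M) := {t | D t x}

def ofRows (R : α → Finset (Fin M)) : Fin M → α → Bool := fun t x => t ∈ R x

@[simp] lemma rows_ofRows (R : α → Finset (Fin M)) : rows (ofRows R) = R := by
  ext x t; simp [rows, ofRows]

lemma ofRows_rows (D : Fin M → α → Bool) : ofRows (rows D) = D := by
  ext t x; simp [rows, ofRows]

lemma fr1_eq_card_rows (D : Fin M → α → Bool) (x : α) : fr1 D x = #(rows D x) := by
  rw [fr1, Nat.card_eq_fintype_card, Fintype.card_subtype, rows]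

lemma fr2_eq_card_rows_inter (D : Fin M → α → Bool) (x y : α) :
    fr2 D x y = #(rows D x ∩ rows D y) := by
  rw [fr2, Nat.card_eq_fintype_card, Fintype.card_subtype, rows, rows, filter_and]

lemma fr2_comm (D : Fin M → α → Bool) (x y : α) : fr2 D x y = fr2 D y x := by
  rw [fr2_eq_card_rows_inter, fr2_eq_card_rows_inter, inter_comm]

lemma mem_rows_of_fr2_eq_one {D : Fin M → α → Bool} {x y : α} {r : Fin M}
    (hx : rows D x = {r}) (h : fr2 D x y = 1) : r ∈ rows D y := by
  rwa [fr2_eq_card_rows_inter, hx, card_singleton_inter_eq_one_iff] at h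

lemma notMem_rows_of_fr2_eq_zero {D : Fin M → α → Bool} {x y : α} {r : Fin M}
    (hx : rows D x = {r}) (h : fr2 D x y = 0) : r ∉ rows D y := by
  rwa [fr2_eq_card_rows_inter, hx, card_singleton_inter_eq_zero_iff] at h

lemma rows_eq_of_subset {D : Fin M → α → Bool} {x : α} {s : Finset (Fin M)}
    (hs : s ⊆ rows D x) (h : fr1 D x = #s) : rows D x = s :=
  (eq_of_subset_of_card_le hs (by rw [← fr1_eq_card_rows, h])).symm

lemma rows_eq_compl_singleton {D : Fin M → α → Bool} {x y : α} {r : Fin M}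
    (hx : rows D x = {r}) (h : fr2 D x y = 0) (hy : fr1 D y = M - 1) : rows D y = {r}ᶜ :=
  eq_of_subset_of_card_le (by simpa using notMem_rows_of_fr2_eq_zero hx h)
    (by simp [card_compl, ← fr1_eq_card_rows, hy])

lemma exists_equiv_rows_eq_singleton {D : Fin M → α → Bool} {x : Fin M → α}
    (h1 : ∀ i, fr1 D (x i) = 1) (h2 : ∀ i j, i ≠ j → fr2 D (x i) (x j) = 0) :
    ∃ π : Fin M ≃ Fin M, ∀ i, rows D (x i) = {π i} := by
  simp only [fr1_eq_card_rows, card_eq_one] at h1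
  choose π hπ using h1
  have hinj : π.Injective := fun i j hij => by
    by_contra hne
    have := h2 i j hne
    rw [fr2_eq_card_rows_inter, hπ, hπ, hij, inter_self, card_singleton] at this
    exact one_ne_zero this
  exact ⟨Equiv.ofBijective π (Finite.injective_iff_bijective.1 hinj), hπ⟩

end Frequency

namespace Fin

variable {M : ℕ} [NeZero M]

lemma add_one_ne_self (hM : 1 < M) (i : Fin M) : i + 1 ≠ i := by
  rw [Ne, add_eq_left]
  simp [Fin.ext_iff, Nat.mod_eq_of_lt hM]

lemma add_one_add_one_ne_self (hM : 2 < M) (i : Fin M) : i + 1 + 1 ≠ i := by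
  rw [Ne, add_assoc, add_eq_left]
  simp [Fin.ext_iff, Fin.val_add, Nat.mod_eq_of_lt hM]

lemma add_one_ne_sub_one (hM : 2 < M) (k : Fin M) : k + 1 ≠ k - 1 := fun h =>
  add_one_add_one_ne_self hM (k - 1) (by rw [sub_add_cancel, h])

end Fin

section CyclicOrdering

variable {M : ℕ} [NeZero M]

def cycleEdges (σ : Fin M → Fin M) : Set (Sym2 (Fin M)) := {P | ∃ i, P = s(σ i, σ (i + 1))}

lemma mk_mem_cycleEdges (σ : Fin M → Fin M) (i : Fin M) :
    s(σ i, σ (i + 1)) ∈ cycleEdges σ :=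
  ⟨i, rfl⟩

lemma mk_mem_cycleEdges_iff {σ : Fin M → Fin M} (hσ : σ.Injective) (i a : Fin M) :
    s(σ i, a) ∈ cycleEdges σ ↔ a = σ (i + 1) ∨ a = σ (i - 1) := by
  constructor
  · rintro ⟨j, hj⟩
    rcases Sym2.eq_iff.1 hj with ⟨hij, rfl⟩ | ⟨hij, rfl⟩
    · rw [hσ hij]; exact Or.inl rfl
    · rw [hσ hij, add_sub_cancel_right]; exact Or.inr rfl
  · rintro (rfl | rfl)
    · exact mk_mem_cycleEdges σ i
    · simpa [Sym2.eq_swap] using mk_mem_cycleEdges σ (i - 1)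

lemma cycleEdges_comp_add_right (σ : Fin M → Fin M) (k : Fin M) :
    cycleEdges (fun i => σ (i + k)) = cycleEdges σ := by
  ext P
  constructor
  · rintro ⟨i, rfl⟩
    exact ⟨i + k, by dsimp only; rw [add_right_comm]⟩
  · rintro ⟨i, rfl⟩
    exact ⟨i - k, by dsimp only; congr 2 <;> abel⟩

lemma cycleEdges_comp_sub_left (σ : Fin M → Fin M) (k : Fin M) :
    cycleEdges (fun i => σ (k - i)) = cycleEdges σ := by
  ext P
  constructor <;>
  · rintro ⟨i, rfl⟩
    exact ⟨k - i - 1, by dsimp only; rw [Sym2.eq_swap]; congr 2 <;> abel⟩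

open Fin.NatCast in
/-- Each next vertex is the neighbour of the current one other than the previous one. -/
lemma eq_of_cycleEdges_eq (hM : 2 < M) {σ τ : Fin M → Fin M} (hσ : σ.Injective)
    (hτ : τ.Injective) (h : cycleEdges τ = cycleEdges σ) (h0 : τ 0 = σ 0) (h1 : τ 1 = σ 1) :
    τ = σ := by
  have key : ∀ n : ℕ, τ n = σ n ∧ τ (n + 1) = σ (n + 1) := by
    intro n
    induction n with
    | zero => simpa using ⟨h0, h1⟩
    | succ n ih =>
      refine ⟨by simpa using ih.2, ?_⟩
      have hmem := h ▸ mk_mem_cycleEdges τ ((n : Fin M) + 1)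
      rw [ih.2, mk_mem_cycleEdges_iff hσ, add_sub_cancel_right, ← ih.1] at hmem
      push_cast
      exact hmem.resolve_right fun h' => Fin.add_one_add_one_ne_self hM _ (hτ h')
  funext i
  simpa using (key i).1

def dihedralPerm (k : Fin M) : Bool → Equiv.Perm (Fin M)
  | false => Equiv.addRight k
  | true => Equiv.subLeft k

@[simp] lemma dihedralPerm_apply_zero (k : Fin M) (b : Bool) : dihedralPerm k b 0 = k := by
  cases b <;> simp [dihedralPerm]

lemma dihedralPerm_apply_one (k : Fin M) (b : Bool) :
    dihedralPerm k b 1 = cond b (k - 1) (k + 1) := by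
  cases b <;> simp [dihedralPerm, add_comm]

lemma cycleEdges_comp_dihedralPerm (σ : Fin M → Fin M) (k : Fin M) (b : Bool) :
    cycleEdges (σ ∘ dihedralPerm k b) = cycleEdges σ := by
  cases b
  · exact cycleEdges_comp_add_right σ k
  · exact cycleEdges_comp_sub_left σ k

lemma dihedralPerm_injective (hM : 2 < M) :
    Function.Injective fun x : Fin M × Bool => dihedralPerm x.1 x.2 := by
  rintro ⟨k, b⟩ ⟨k', b'⟩ h
  obtain rfl : k = k' := by simpa using DFunLike.congr_fun h 0
  have h1 := DFunLike.congr_fun h 1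
  simp only [dihedralPerm_apply_one] at h1
  cases b <;> cases b' <;> simp only [cond_true, cond_false] at h1
  · rfl
  · exact absurd h1 (Fin.add_one_ne_sub_one hM k)
  · exact absurd h1.symm (Fin.add_one_ne_sub_one hM k)
  · rfl

theorem card_cycleEdges_eq (hM : 2 < M) (σ : Fin M ≃ Fin M) :
    Nat.card {τ : Fin M ≃ Fin M // cycleEdges τ = cycleEdges σ} = 2 * M := by
  let F : Fin M × Bool → {τ : Fin M ≃ Fin M // cycleEdges τ = cycleEdges σ} := fun x =>
    ⟨(dihedralPerm x.1 x.2).trans σ, cycleEdges_comp_dihedralPerm σ x.1 x.2⟩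
  have hF : F.Bijective := by
    refine ⟨fun x y h => dihedralPerm_injective hM ?_, ?_⟩
    · exact Equiv.ext fun i => σ.injective (DFunLike.congr_fun (congrArg Subtype.val h) i)
    rintro ⟨τ, hτ⟩
    set k := σ.symm (τ 0)
    have hmem := hτ ▸ mk_mem_cycleEdges τ 0
    rw [zero_add, ← σ.apply_symm_apply (τ 0), mk_mem_cycleEdges_iff σ.injective] at hmem
    obtain ⟨b, hb⟩ : ∃ b, τ 1 = σ (dihedralPerm k b 1) := by
      rcases hmem with h | h
      · exact ⟨false, by rw [h, dihedralPerm_apply_one]; rfl⟩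
      · exact ⟨true, by rw [h, dihedralPerm_apply_one]; rfl⟩
    refine ⟨(k, b), Subtype.ext (Equiv.coe_inj.1 (eq_of_cycleEdges_eq hM
      (σ.injective.comp (dihedralPerm k b).injective) τ.injective
      (hτ.trans (cycleEdges_comp_dihedralPerm σ k b).symm) ?_ hb).symm)⟩
    simp [k]
  rw [← Nat.card_eq_of_bijective F hF, Nat.card_prod, Nat.card_eq_fintype_card,
    Nat.card_eq_fintype_card, Fintype.card_fin, Fintype.card_bool, mul_comm]

end CyclicOrdering

section Window

variable {M : ℕ} [NeZero M]

/-- The window `{i, i + 1}` loses an element exactly when it meets `{p, q}`, and never loses both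
since `p` and `q` are not adjacent. -/
lemma card_window_filter (hM : 1 < M) {p q : Fin M} (hpq : p + 1 ≠ q) (hqp : q + 1 ≠ p)
    (i : Fin M) : #(({i, i + 1} : Finset (Fin M)).filter (fun k => k ≠ p ∧ k ≠ q)) =
      if i = p ∨ i = q ∨ i + 1 = p ∨ i + 1 = q then 1 else 2 := by
  have := Fin.add_one_ne_self hM i
  rw [filter_insert, filter_singleton]
  split_ifs <;> grind

lemma card_windows_meeting_pair (hM : 1 < M) {p q : Fin M} (hpq : p ≠ q) (hpq' : p + 1 ≠ q)
    (hqp : q + 1 ≠ p) :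
    #({i | i = p ∨ i = q ∨ i + 1 = p ∨ i + 1 = q} : Finset (Fin M)) = 4 := by
  have hset : ({i | i = p ∨ i = q ∨ i + 1 = p ∨ i + 1 = q} : Finset (Fin M)) =
      {p, q, p - 1, q - 1} := by
    ext i; simp [eq_sub_iff_add_eq]
  have hp := Fin.add_one_ne_self hM p
  have hq := Fin.add_one_ne_self hM q
  rw [hset, card_insert_of_notMem, card_insert_of_notMem, card_pair]
  all_goals simp [eq_sub_iff_add_eq, *]

theorem prod_card_window_filter (hM : 1 < M) {p q : Fin M} (hpq : p ≠ q) (hpq' : p + 1 ≠ q)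
    (hqp : q + 1 ≠ p) :
    ∏ i, #(({i, i + 1} : Finset (Fin M)).filter (fun k => k ≠ p ∧ k ≠ q)) =
      2 ^ (M - 4) := by
  simp_rw [card_window_filter hM hpq' hqp]
  rw [prod_ite, prod_const_one, prod_const, one_mul, filter_not,
    card_sdiff_of_subset (filter_subset _ _), card_univ, Fintype.card_fin,
    card_windows_meeting_pair hM hpq hpq' hqp]

end Window

section Reduction

variable {M : ℕ} [NeZero M] {G : SimpleGraph (Fin M)}

abbrev NonEdge (G : SimpleGraph (Fin M)) := {P : Sym2 (Fin M) // ¬ P.IsDiag ∧ P ∉ G.edgeSet}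

def slots (τ : Fin M → Fin M) (i : Fin M) (P : Sym2 (Fin M)) : Finset (Fin M) :=
  ({i, i + 1} : Finset (Fin M)).filter (fun k => τ k ∉ P)

/-- `κ i P` is the position of `τ` in whose row `s_{i,P}` lies. -/
def hcRows (ρ τ : Fin M ≃ Fin M) (κ : Fin M → NonEdge G → Fin M) :
    Col M G → Finset (Fin M)
  | .o i => {ρ (τ i)}
  | .v j => {ρ j}
  | .b i => {ρ (τ i), ρ (τ (i + 1))}
  | .c P => P.1.toFinset.map ρ.toEmbedding
  | .s i P => {ρ (τ (κ i P))}
  | .e i P => {ρ (τ (κ i P))}ᶜ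

lemma satisfies_ofRows_hcRows (hM : 1 < M) (ρ τ : Fin M ≃ Fin M)
    {κ : Fin M → NonEdge G → Fin M} (hκ : ∀ i P, κ i P ∈ slots τ i P.1) :
    Satisfies M G (ofRows (hcRows ρ τ κ)) := by
  have hb : ∀ i, ρ (τ i) ≠ ρ (τ (i + 1)) := fun i h =>
    Fin.add_one_ne_self hM i (τ.injective (ρ.injective h)).symm
  have hs : ∀ i P, (κ i P = i ∨ κ i P = i + 1) ∧ τ (κ i P) ∉ P.1 := fun i P => by
    simpa [slots] using hκ i P
  simp only [Satisfies, fr1_eq_card_rows, fr2_eq_card_rows_inter, rows_ofRows, hcRows]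
  refine ⟨fun _ => card_singleton _, fun i j hij => by simp [hij], fun _ => card_singleton _,
    fun i j hij => by simp [hij], fun i => card_pair (hb i), fun i => by simp,
    fun i => by simp, fun P => by rw [card_map, Sym2.card_toFinset_of_not_isDiag _ P.2],
    fun P j hj => by simp [inter_comm, hj],
    fun _ _ => card_singleton _, fun i P => card_singleton_inter_eq_one_iff.2 ?_,
    fun i P => card_singleton_inter_eq_zero_iff.2 ?_, fun _ _ => by simp [card_compl],
    fun _ _ => by simp⟩
  · simpa using (hs i P).1
  · simpa using (hs i P).2

lemma hcRows_injective {ρ τ ρ' τ' : Fin M ≃ Fin M} {κ κ' : Fin M → NonEdge G → Fin M}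
    (h : hcRows ρ τ κ = hcRows ρ' τ' κ') : ρ = ρ' ∧ τ = τ' ∧ κ = κ' := by
  obtain rfl : ρ = ρ' := Equiv.ext fun j => singleton_inj.1 (congrFun h (.v j))
  obtain rfl : τ = τ' := Equiv.ext fun i => ρ.injective (singleton_inj.1 (congrFun h (.o i)))
  exact ⟨rfl, rfl, funext₂ fun i P =>
    τ.injective (ρ.injective (singleton_inj.1 (congrFun h (.s i P))))⟩

lemma ofRows_hcRows_induced_ordering_iff (ρ τ : Fin M ≃ Fin M)
    (κ : Fin M → NonEdge G → Fin M) (σ : Fin M → Fin M) :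
    (∀ i, ∃ t, ofRows (hcRows ρ τ κ) t (.o i) = true ∧
      ofRows (hcRows ρ τ κ) t (.v (σ i)) = true) ↔ σ = τ := by
  simp [ofRows, hcRows, funext_iff, eq_comm]

lemma exists_rows_eq_hcRows (hM : 1 < M) {D : Fin M → Col M G → Bool} (hD : Satisfies M G D) :
    ∃ ρ τ : Fin M ≃ Fin M, ∃ κ : Fin M → NonEdge G → Fin M,
      (∀ i P, κ i P ∈ slots τ i P.1) ∧ rows D = hcRows ρ τ κ := by
  obtain ⟨h1o, h2o, h1v, h2v, h1b, h2bo, h2bo1, h1c, h2cv, h1s, h2sb, h2sc, h1e, h2se⟩ := hD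
  obtain ⟨ρ, hρ⟩ := exists_equiv_rows_eq_singleton h1v h2v
  obtain ⟨π, hπ⟩ := exists_equiv_rows_eq_singleton h1o h2o
  set τ := π.trans ρ.symm
  have hτ : ∀ i, ρ (τ i) = π i := fun i => ρ.apply_symm_apply (π i)
  have hb : ∀ i, rows D (.b i) = {π i, π (i + 1)} := fun i =>
    rows_eq_of_subset
      (insert_subset (mem_rows_of_fr2_eq_one (hπ i) ((fr2_comm ..).trans (h2bo i)))
        (singleton_subset_iff.2 (mem_rows_of_fr2_eq_one (hπ _) ((fr2_comm ..).trans (h2bo1 i)))))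
      (by rw [h1b, card_pair fun h => Fin.add_one_ne_self hM i (π.injective h).symm])
  have hc : ∀ P, rows D (.c P) = P.1.toFinset.map ρ.toEmbedding := fun P => by
    refine rows_eq_of_subset ?_ (by rw [h1c, card_map, Sym2.card_toFinset_of_not_isDiag _ P.2])
    simp only [subset_iff, mem_map, Sym2.mem_toFinset, Equiv.coe_toEmbedding]
    rintro _ ⟨j, hj, rfl⟩
    exact mem_rows_of_fr2_eq_one (hρ j) ((fr2_comm ..).trans (h2cv P j hj))
  choose r hr using fun i P => card_eq_one.1 ((fr1_eq_card_rows D (.s i P)).symm.trans (h1s i P))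
  refine ⟨ρ, τ, fun i P => π.symm (r i P), fun i P => ?_, ?_⟩
  · have hrb := mem_rows_of_fr2_eq_one (hr i P) (h2sb i P)
    have hrc := notMem_rows_of_fr2_eq_zero (hr i P) (h2sc i P)
    rw [hb] at hrb
    rw [hc] at hrc
    simp only [mem_insert, mem_singleton, ← π.symm_apply_eq] at hrb
    simp only [mem_map, Sym2.mem_toFinset, Equiv.coe_toEmbedding, not_exists, not_and] at hrc
    simp only [slots, mem_filter, mem_insert, mem_singleton]
    refine ⟨hrb, fun h => hrc _ h ?_⟩
    simp [τ]
  · ext1 c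
    cases c with
    | o i => simp [hcRows, hπ, hτ]
    | v j => simp [hcRows, hρ]
    | b i => simp [hcRows, hb, hτ]
    | c P => simp [hcRows, hc]
    | s i P => simp [hcRows, hr, τ]
    | e i P => simpa [hcRows, τ] using rows_eq_compl_singleton (hr i P) (h2se i P) (h1e i P)

lemma prod_card_slots (hM : 1 < M) {τ : Fin M ≃ Fin M} {P : Sym2 (Fin M)} (hP : ¬ P.IsDiag)
    (hPτ : P ∉ cycleEdges τ) : ∏ i, #(slots τ i P) = 2 ^ (M - 4) := by
  induction P using Sym2.ind with | _ a b =>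
  have hslots : ∀ i, slots τ i s(a, b) =
      ({i, i + 1} : Finset (Fin M)).filter (fun k => k ≠ τ.symm a ∧ k ≠ τ.symm b) := by
    intro i
    simp [slots, Sym2.mem_iff, ← Equiv.eq_symm_apply]
  simp only [hslots]
  refine prod_card_window_filter hM (by simpa using hP) (fun h => hPτ ⟨τ.symm a, ?_⟩)
    (fun h => hPτ ⟨τ.symm b, ?_⟩)
  · simp [h]
  · simp [h, Sym2.eq_swap]

end Reduction

section Params

variable {M : ℕ} [NeZero M] {G H : SimpleGraph (Fin M)}

abbrev HCParams (G H : SimpleGraph (Fin M)) :=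
  Σ τ : {τ : Fin M ≃ Fin M // cycleEdges τ = H.edgeSet},
    (Fin M ≃ Fin M) × ∀ i (P : NonEdge G), slots τ.1 i P.1

def HCParams.toDataset (x : HCParams G H) : Fin M → Col M G → Bool :=
  ofRows (hcRows x.2.1 x.1.1 fun i P => x.2.2 i P)

lemma HCParams.toDataset_injective : Function.Injective (toDataset (G := G) (H := H)) := by
  rintro ⟨⟨τ, hτ⟩, ρ, κ⟩ ⟨⟨τ', hτ'⟩, ρ', κ'⟩ h
  obtain ⟨rfl, rfl, hκ⟩ := hcRows_injective (by simpa [toDataset] using congrArg rows h)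
  obtain rfl : κ = κ' := funext₂ fun i P => Subtype.ext (congrFun₂ hκ i P)
  rfl

theorem satisfies_and_traces_iff (hM : 1 < M) (D : Fin M → Col M G → Bool) :
    (Satisfies M G D ∧ ∀ σ : Fin M → Fin M,
        (∀ i, ∃ t, D t (.o i) = true ∧ D t (.v (σ i)) = true) →
          H.edgeSet = cycleEdges σ) ↔
      D ∈ Set.range (HCParams.toDataset (G := G) (H := H)) := by
  constructor
  · rintro ⟨hD, htr⟩
    obtain ⟨ρ, τ, κ, hκ, hrows⟩ := exists_rows_eq_hcRows hM hD
    rw [← ofRows_rows D, hrows] at htr ⊢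
    have hτ := htr τ ((ofRows_hcRows_induced_ordering_iff ρ τ κ τ).2 rfl)
    exact ⟨⟨⟨τ, hτ.symm⟩, ρ, fun i P => ⟨κ i P, hκ i P⟩⟩, rfl⟩
  · rintro ⟨⟨⟨τ, hτ⟩, ρ, κ⟩, rfl⟩
    refine ⟨satisfies_ofRows_hcRows hM ρ τ fun i P => (κ i P).2, fun σ hσ => ?_⟩
    rw [(ofRows_hcRows_induced_ordering_iff ρ τ _ σ).1 hσ, hτ]

open scoped Nat in
theorem card_hcParams (hM : 2 < M) (hHG : H ≤ G) [DecidableRel G.Adj] (σ : Fin M ≃ Fin M)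
    (hσ : H.edgeSet = cycleEdges σ) :
    Nat.card (HCParams G H) = 2 * M * (M ! * 2 ^ ((M - 4) * (M.choose 2 - #G.edgeFinset))) := by
  have hslots : ∀ τ : {τ : Fin M ≃ Fin M // cycleEdges τ = H.edgeSet},
      Nat.card (∀ i (P : NonEdge G), slots τ.1 i P.1) =
        2 ^ ((M - 4) * (M.choose 2 - #G.edgeFinset)) := fun τ => by
    simp only [Nat.card_pi, Nat.card_eq_finsetCard]
    rw [prod_comm, prod_congr rfl fun P _ => prod_card_slots (by omega) P.2.1 ?_]
    · rw [prod_const, card_univ, ← Nat.card_eq_fintype_card, SimpleGraph.card_nonEdge,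
        Fintype.card_fin, pow_mul]
    · rw [τ.2]
      exact fun h => P.2.2 (SimpleGraph.edgeSet_mono hHG h)
  rw [Nat.card_sigma, sum_congr rfl fun τ _ => by rw [Nat.card_prod, hslots, Nat.card_perm],
    sum_const, card_univ, ← Nat.card_eq_fintype_card, hσ, card_cycleEdges_eq hM, Nat.card_fin,
    smul_eq_mul]

end Params

/-- Fix a Hamiltonian cycle `H` of `G` (a subgraph of `G` whose edge
set is that of a cyclic ordering of all the vertices). The number of 0–1 datasets
with `M` rows satisfying all the constraints of the Hamiltonian-cycle reduction
whose induced cyclic ordering `σ` (defined by `σ i = ` the unique `j` such that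
some row has a 1 in both `o i` and `v j`) traces `H` is exactly
`M! · 2M · 2^((M−4)·L)`, where `L = M(M−1)/2 − N` and `N` is the number of edges
of `G`; in particular this number does not depend on the cycle `H`. -/
theorem count_datasets_per_hamiltonian_cycle (M : ℕ) [NeZero M] (hM : 3 ≤ M)
    (G : SimpleGraph (Fin M)) [DecidableRel G.Adj]
    (H : SimpleGraph (Fin M)) (hHG : H ≤ G)
    (hH : ∃ σ : Fin M → Fin M, Function.Bijective σ ∧
      H.edgeSet = {P : Sym2 (Fin M) | ∃ i : Fin M, P = Sym2.mk (σ i) (σ (i + 1))}) :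
    Nat.card {D : Fin M → Col M G → Bool //
        Satisfies M G D ∧
        ∀ σ : Fin M → Fin M,
          (∀ i : Fin M, ∃ t : Fin M, D t (Col.o i) = true ∧ D t (Col.v (σ i)) = true) →
          H.edgeSet = {P : Sym2 (Fin M) | ∃ i : Fin M, P = Sym2.mk (σ i) (σ (i + 1))}} =
      Nat.factorial M * (2 * M) *
        2 ^ ((M - 4) * (M * (M - 1) / 2 - G.edgeFinset.card)) := by
  obtain ⟨σ, hσ, hH⟩ := hH
  calc _ = Nat.card (Set.range (HCParams.toDataset (G := G) (H := H))) :=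
        Nat.card_congr (Equiv.subtypeEquivRight (satisfies_and_traces_iff (by omega)))
    _ = Nat.card (HCParams G H) := Nat.card_range_of_injective HCParams.toDataset_injective
    _ = _ := by
      rw [card_hcParams (by omega) hHG (Equiv.ofBijective σ hσ) hH, Nat.choose_two_right]
      ring
end

section
/- Let G be a simple graph on vertex set Fin M with M ≥ 3 and L non-edges, and consider the constraint system of the Hamiltonian-cycle reduction. The total number of 0–1 datasets with M rows satisfying all the itemset frequency constraints equals M! · 2M · 2^{(M−4)L} times the number of Hamiltonian cycles of G; in particular, a dataset satisfying the constraints exists if and only if G has a Hamiltonian cycle. -/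
/-!
A satisfying dataset is pinned down by three choices: the permutation `ρ` sending `i` to the row
of `o_i`, the permutation `π` sending a vertex `j` to the row of `v_j`, and for every `s_{i,P}` a
row of the window `{ρ i, ρ (i+1)}` outside the pair of rows `π(P)`; all other columns are then
forced. Writing `σ = π⁻¹ρ`, the number of rows available for `s_{i,P}` is
`|{σ i, σ (i+1)} \ P|`. For a fixed non-edge `P` the product of these numbers over `i` is `0` if
`P` is a step of the cyclic order `σ`, and `2^(M-4)` otherwise, since the two vertices of `P`
then meet exactly four windows, each in one vertex. So only the Hamiltonian orders `σ`
contribute, each with `2^((M-4)L)`, and `π` is free. Finally the Hamiltonian orders inducing a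
given Hamiltonian cycle are its `2M` rotations and reflections.
-/

open Equiv Finset

namespace Finset

variable {β : Type*} [DecidableEq β] {s : Finset β} {a b : β}

lemma mem_of_card_singleton_inter (h : #({a} ∩ s) = 1) : a ∈ s := by
  by_contra ha
  simp [singleton_inter_of_notMem ha] at h

lemma notMem_of_card_singleton_inter (h : #({a} ∩ s) = 0) : a ∉ s := fun ha => by
  simp [singleton_inter_of_mem ha] at h

lemma eq_pair_of_card_eq_two (h : #s = 2) (hab : a ≠ b) (ha : a ∈ s) (hb : b ∈ s) :
    s = {a, b} :=
  (eq_of_subset_of_card_le (insert_subset ha (singleton_subset_iff.mpr hb))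
    (by rw [h, card_pair hab])).symm

lemma eq_compl_singleton_of_card [Fintype β] (h : #s = Fintype.card β - 1)
    (ha : #({a} ∩ s) = 0) : s = {a}ᶜ :=
  eq_of_subset_of_card_le
    (fun t ht => mem_compl.mpr <| mem_singleton.not.mpr <| by
      rintro rfl
      exact notMem_of_card_singleton_inter ha ht)
    (by rw [card_compl, card_singleton, h])

lemma exists_perm_of_card_eq_one [Fintype β] {S : β → Finset β} (h1 : ∀ i, #(S i) = 1)
    (h2 : ∀ i j, i ≠ j → #(S i ∩ S j) = 0) : ∃ ρ : Perm β, ∀ i, S i = {ρ i} := by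
  choose f hf using fun i => card_eq_one.mp (h1 i)
  have hf_inj : Function.Injective f := fun i j hij => by
    by_contra hne
    simpa [hf, hij] using h2 i j hne
  exact ⟨Equiv.ofBijective f (Finite.injective_iff_bijective.mp hf_inj), hf⟩

end Finset

lemma Nat.card_eq_card_mul_of_card_fiber {α β : Type*} [Finite α] [Finite β] {f : α → β}
    {n : ℕ} (h : ∀ b, Nat.card {a // f a = b} = n) : Nat.card α = Nat.card β * n := by
  have := Fintype.ofFinite β
  rw [← Nat.card_congr (Equiv.sigmaFiberEquiv f), Nat.card_sigma]
  simp [h, Nat.card_eq_fintype_card]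

namespace Fin

variable {M : ℕ} [NeZero M]

lemma self_ne_add_one (hM : 2 ≤ M) (i : Fin M) : i ≠ i + 1 := by
  simp [eq_comm, Fin.ext_iff, Nat.mod_eq_of_lt (show 1 < M by omega)]

lemma one_add_one_ne_zero (hM : 3 ≤ M) : (1 : Fin M) + 1 ≠ 0 := by
  simp [Fin.ext_iff, Fin.val_add, Nat.mod_eq_of_lt (show 1 < M by omega),
    Nat.mod_eq_of_lt (show 2 < M by omega)]

lemma apply_eq_apply_zero_of_apply_add_one {β : Type*} {f : Fin M → β}
    (h : ∀ i, f (i + 1) = f i) (i : Fin M) : f i = f 0 := by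
  obtain ⟨n, rfl⟩ : ∃ n, M = n + 1 := Nat.exists_eq_succ_of_ne_zero (NeZero.ne M)
  induction i using Fin.induction with
  | zero => rfl
  | succ i ih => rw [← Fin.coeSucc_eq_succ, h, ih]

end Fin

namespace HamiltonianReduction

section Columns

variable {M : ℕ} {α : Type*}

def column (D : Fin M → α → Bool) (x : α) : Finset (Fin M) := {t | D t x}

def columnEquiv : (Fin M → α → Bool) ≃ (α → Finset (Fin M)) where
  toFun := column
  invFun S t x := decide (t ∈ S x)
  left_inv D := by ext; simp [column]
  right_inv S := by ext; simp [column]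

lemma fr1_eq_card_column (D : Fin M → α → Bool) (x : α) : fr1 D x = #(column D x) := by
  rw [fr1, Nat.card_eq_fintype_card, Fintype.card_subtype, column]

lemma fr2_eq_card_inter (D : Fin M → α → Bool) (x y : α) :
    fr2 D x y = #(column D x ∩ column D y) := by
  rw [fr2, Nat.card_eq_fintype_card, Fintype.card_subtype, column, column, filter_and]

abbrev NonEdge (G : SimpleGraph (Fin M)) := {P : Sym2 (Fin M) // ¬ P.IsDiag ∧ P ∉ G.edgeSet}

lemma card_nonEdge (G : SimpleGraph (Fin M)) [DecidableRel G.Adj] :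
    Fintype.card (NonEdge G) = M * (M - 1) / 2 - #G.edgeFinset := by
  have htop := SimpleGraph.card_edgeFinset_top_eq_card_choose_two (V := Fin M)
  rw [Fintype.card_fin] at htop
  rw [← Nat.choose_two_right, Fintype.card_subtype, ← htop,
    ← card_sdiff_of_subset (SimpleGraph.edgeFinset_mono le_top)]
  congr 1
  ext P
  simp

end Columns

variable {M : ℕ} [NeZero M]

section CyclicOrder

def cycleEdges (σ : Fin M → Fin M) : Set (Sym2 (Fin M)) := {P | ∃ i, P = s(σ i, σ (i + 1))}

def dihedralPerm : Fin M × Bool → Perm (Fin M)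
  | (c, false) => Equiv.addLeft c
  | (c, true) => Equiv.subLeft c

lemma dihedralPerm_injective (hM : 3 ≤ M) : Function.Injective (dihedralPerm (M := M)) := by
  have h1 : (1 : Fin M) ≠ -1 := fun h => Fin.one_add_one_ne_zero hM (eq_neg_iff_add_eq_zero.mp h)
  rintro ⟨c, d⟩ ⟨c', d'⟩ h
  have h0 := DFunLike.congr_fun h 0
  have h1' := DFunLike.congr_fun h 1
  cases d <;> cases d' <;>
    simp only [dihedralPerm, coe_addLeft, subLeft_apply, add_zero, neg_zero, sub_eq_add_neg]
      at h0 h1' <;>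
    subst h0
  · rfl
  · exact absurd (add_left_cancel h1') h1
  · exact absurd (add_left_cancel h1').symm h1
  · rfl

lemma cycleEdges_mul (σ τ : Perm (Fin M)) :
    cycleEdges ⇑(σ * τ) = Sym2.map σ '' cycleEdges τ := by
  ext P
  simp [cycleEdges, eq_comm]

lemma cycleEdges_dihedralPerm (p : Fin M × Bool) :
    cycleEdges (dihedralPerm p) = cycleEdges id := by
  obtain ⟨c, _ | _⟩ := p <;> ext P <;> constructor <;> rintro ⟨i, rfl⟩
  · exact ⟨c + i, by simp only [dihedralPerm, coe_addLeft, id, add_assoc]⟩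
  · exact ⟨i - c, by simp only [dihedralPerm, coe_addLeft, id]; congr 1 <;> abel⟩
  all_goals
    exact ⟨c - i - 1, by
      simp only [dihedralPerm, subLeft_apply, id]; rw [Sym2.eq_swap]; congr 1 <;> abel⟩

lemma exists_dihedralPerm_of_cycleEdges_subset (hM : 3 ≤ M) {τ : Perm (Fin M)}
    (h : cycleEdges τ ⊆ cycleEdges id) : ∃ p, τ = dihedralPerm p := by
  obtain ⟨δ, hδ_def⟩ : ∃ δ : Fin M → Fin M, ∀ i, δ i = τ (i + 1) - τ i := ⟨_, fun _ => rfl⟩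
  have hδ : ∀ i, δ i = 1 ∨ δ i = -1 := by
    intro i
    obtain ⟨j, hj⟩ := h ⟨i, rfl⟩
    rcases Sym2.eq_iff.mp hj with ⟨h1, h2⟩ | ⟨h1, h2⟩
    · left; simp [hδ_def, h1, h2]
    · right; simp [hδ_def, h1, h2]
  -- two consecutive steps cannot cancel, since `τ (i + 2) ≠ τ i`
  have hδ_succ : ∀ i, δ (i + 1) = δ i := by
    intro i
    have hsum : δ (i + 1) + δ i ≠ 0 := by
      rw [hδ_def, hδ_def, sub_add_sub_cancel, sub_ne_zero, ne_eq, τ.injective.eq_iff, add_assoc,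
        add_eq_left]
      exact Fin.one_add_one_ne_zero hM
    rcases hδ i with hi | hi <;> rcases hδ (i + 1) with hi' | hi' <;> rw [hi, hi'] at hsum ⊢ <;>
      simp at hsum ⊢
  have hδ_const := Fin.apply_eq_apply_zero_of_apply_add_one hδ_succ
  rcases hδ 0 with h0 | h0
  · have hstep : ∀ i, τ (i + 1) = τ i + 1 := fun i => by
      rw [← sub_eq_iff_eq_add', ← hδ_def, hδ_const, h0]
    refine ⟨(τ 0, false), Equiv.ext fun i => ?_⟩
    have := Fin.apply_eq_apply_zero_of_apply_add_one (f := fun i => τ i - i)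
      (fun i => by simp only [hstep]; abel) i
    simp only [dihedralPerm, coe_addLeft, sub_zero] at this ⊢
    rw [← this]; abel
  · have hstep : ∀ i, τ (i + 1) = τ i - 1 := fun i => by
      rw [sub_eq_add_neg, ← sub_eq_iff_eq_add', ← hδ_def, hδ_const, h0]
    refine ⟨(τ 0, true), Equiv.ext fun i => ?_⟩
    have := Fin.apply_eq_apply_zero_of_apply_add_one (f := fun i => τ i + i)
      (fun i => by simp only [hstep]; abel) i
    simp only [dihedralPerm, subLeft_apply, add_zero] at this ⊢
    rw [← this]; abel

lemma cycleEdges_eq_iff (hM : 3 ≤ M) (σ₀ σ : Perm (Fin M)) :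
    cycleEdges σ = cycleEdges σ₀ ↔ ∃ p, σ₀ * dihedralPerm p = σ := by
  constructor
  · intro h
    have h' : cycleEdges ⇑(σ₀⁻¹ * σ) = cycleEdges id := by
      rw [cycleEdges_mul, h, ← cycleEdges_mul, inv_mul_cancel, Perm.coe_one]
    obtain ⟨p, hp⟩ := exists_dihedralPerm_of_cycleEdges_subset hM h'.subset
    exact ⟨p, by rw [← hp, mul_inv_cancel_left]⟩
  · rintro ⟨p, rfl⟩
    rw [cycleEdges_mul, cycleEdges_dihedralPerm, ← Perm.coe_one, ← cycleEdges_mul, mul_one]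

lemma not_isDiag_of_mem_cycleEdges (hM : 2 ≤ M) {σ : Perm (Fin M)} {P : Sym2 (Fin M)}
    (hP : P ∈ cycleEdges σ) : ¬ P.IsDiag := by
  obtain ⟨i, rfl⟩ := hP
  simpa using Fin.self_ne_add_one hM i

lemma edgeSet_fromEdgeSet_cycleEdges (hM : 2 ≤ M) (σ : Perm (Fin M)) :
    (SimpleGraph.fromEdgeSet (cycleEdges σ)).edgeSet = cycleEdges σ := by
  rw [SimpleGraph.edgeSet_fromEdgeSet, sdiff_eq_left, Set.disjoint_left]
  exact fun P hP => not_isDiag_of_mem_cycleEdges hM hP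

end CyclicOrder

section HamiltonianOrder

variable (G : SimpleGraph (Fin M))

def IsHamiltonianOrder (σ : Fin M → Fin M) : Prop := ∀ i, G.Adj (σ i) (σ (i + 1))

instance [DecidableRel G.Adj] : DecidablePred (IsHamiltonianOrder G) :=
  fun _ => inferInstanceAs (Decidable (∀ _, _))

lemma isHamiltonianOrder_iff_cycleEdges_subset {σ : Fin M → Fin M} :
    IsHamiltonianOrder G σ ↔ cycleEdges σ ⊆ G.edgeSet := by
  simp [IsHamiltonianOrder, cycleEdges, Set.subset_def]

abbrev HamiltonianCycle : Type :=
  {H : SimpleGraph (Fin M) // H ≤ G ∧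
    ∃ σ : Fin M → Fin M, Function.Bijective σ ∧ H.edgeSet = cycleEdges σ}

lemma card_isHamiltonianOrder (hM : 3 ≤ M) :
    Nat.card {σ : Perm (Fin M) // IsHamiltonianOrder G σ} =
      Nat.card (HamiltonianCycle G) * (2 * M) := by
  have hM2 : 2 ≤ M := by omega
  let F : {σ : Perm (Fin M) // IsHamiltonianOrder G σ} → HamiltonianCycle G := fun σ =>
    ⟨SimpleGraph.fromEdgeSet (cycleEdges σ.1),
      SimpleGraph.edgeSet_subset_edgeSet.mp <| by
        rw [edgeSet_fromEdgeSet_cycleEdges hM2]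
        exact (isHamiltonianOrder_iff_cycleEdges_subset G).mp σ.2,
      σ.1, σ.1.bijective, edgeSet_fromEdgeSet_cycleEdges hM2 σ.1⟩
  have hF : ∀ σ τ, F σ = F τ ↔ cycleEdges σ.1 = cycleEdges τ.1 := fun σ τ => by
    rw [Subtype.ext_iff, ← SimpleGraph.edgeSet_inj, edgeSet_fromEdgeSet_cycleEdges hM2,
      edgeSet_fromEdgeSet_cycleEdges hM2]
  have hF_surj : Function.Surjective F := by
    rintro ⟨H, hHG, σ, hσ, hH⟩
    refine ⟨⟨Equiv.ofBijective σ hσ, (isHamiltonianOrder_iff_cycleEdges_subset G).mpr ?_⟩, ?_⟩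
    · rw [coe_ofBijective, ← hH]
      exact SimpleGraph.edgeSet_subset_edgeSet.mpr hHG
    · rw [Subtype.ext_iff, ← SimpleGraph.edgeSet_inj, edgeSet_fromEdgeSet_cycleEdges hM2]
      exact hH.symm
  refine Nat.card_eq_card_mul_of_card_fiber (f := F) fun y => ?_
  obtain ⟨σ₀, rfl⟩ := hF_surj y
  have hfiber : {σ // F σ = F σ₀} ≃ Set.range (fun p : Fin M × Bool => σ₀.1 * dihedralPerm p) :=
    (Equiv.subtypeEquivRight fun σ => hF σ σ₀).trans <|
      (Equiv.subtypeSubtypeEquivSubtype fun {σ} h =>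
        (isHamiltonianOrder_iff_cycleEdges_subset G).mpr
          (h ▸ (isHamiltonianOrder_iff_cycleEdges_subset G).mp σ₀.2)).trans <|
      Equiv.subtypeEquivRight fun σ => cycleEdges_eq_iff hM σ₀.1 σ
  rw [Nat.card_congr hfiber, Nat.card_range_of_injective (f := fun p => σ₀.1 * dihedralPerm p)
    ((mul_right_injective σ₀.1).comp (dihedralPerm_injective hM))]
  simp [mul_comm]

end HamiltonianOrder

section Windows

lemma card_window_sdiff (hM : 2 ≤ M) {a b : Fin M} (hab1 : a + 1 ≠ b) (hba1 : b + 1 ≠ a)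
    (i : Fin M) :
    #(({i, i + 1} : Finset (Fin M)) \ {a, b}) =
      if i = a ∨ i = b ∨ i + 1 = a ∨ i + 1 = b then 1 else 2 := by
  have hi := Fin.self_ne_add_one hM i
  split_ifs with h
  · rw [card_eq_one]
    rcases h with rfl | rfl | h | h
    · exact ⟨i + 1, by ext t; simp; grind⟩
    · exact ⟨i + 1, by ext t; simp; grind⟩
    · exact ⟨i, by ext t; simp; grind⟩
    · exact ⟨i, by ext t; simp; grind⟩
  · rw [sdiff_eq_left.mpr (by simp [disjoint_left]; grind), card_pair hi]

lemma prod_card_window_sdiff (hM : 2 ≤ M) {a b : Fin M} (hab : a ≠ b) (hab1 : a + 1 ≠ b)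
    (hba1 : b + 1 ≠ a) :
    ∏ i : Fin M, #(({i, i + 1} : Finset (Fin M)) \ {a, b}) = 2 ^ (M - 4) := by
  have h4 : #{i : Fin M | i = a ∨ i = b ∨ i + 1 = a ∨ i + 1 = b} = 4 := by
    have ha := Fin.self_ne_add_one hM a
    have hb := Fin.self_ne_add_one hM b
    rw [show ({i : Fin M | i = a ∨ i = b ∨ i + 1 = a ∨ i + 1 = b} : Finset (Fin M)) =
        {a, b, a - 1, b - 1} by ext i; simp [← eq_sub_iff_add_eq],
      card_insert_of_notMem, card_insert_of_notMem, card_pair]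
    all_goals simp [eq_sub_iff_add_eq]; grind
  simp_rw [card_window_sdiff hM hab1 hba1, prod_ite, prod_const_one, prod_const, one_mul]
  have hsplit := card_filter_add_card_filter_not (s := univ)
    fun i : Fin M => i = a ∨ i = b ∨ i + 1 = a ∨ i + 1 = b
  rw [card_univ, Fintype.card_fin, h4] at hsplit
  congr 1
  omega

lemma prod_card_sdiff_toFinset (hM : 2 ≤ M) (σ : Perm (Fin M)) {P : Sym2 (Fin M)}
    (hP : ¬ P.IsDiag) (hPσ : P ∉ cycleEdges σ) :
    ∏ i, #(({σ i, σ (i + 1)} : Finset (Fin M)) \ P.toFinset) = 2 ^ (M - 4) := by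
  induction P using Sym2.ind with
  | _ x y =>
  obtain ⟨a, rfl⟩ := σ.surjective x
  obtain ⟨b, rfl⟩ := σ.surjective y
  have hab : a ≠ b := by simpa using hP
  have hab1 : a + 1 ≠ b := by rintro rfl; exact hPσ ⟨a, rfl⟩
  have hba1 : b + 1 ≠ a := by rintro rfl; exact hPσ ⟨b, Sym2.eq_swap⟩
  rw [← prod_card_window_sdiff hM hab hab1 hba1]
  refine prod_congr rfl fun i _ => ?_
  rw [Sym2.toFinset_mk_eq, eq_comm, ← card_map σ.toEmbedding, Finset.map_sdiff]
  simp

end Windows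

section Datasets

variable {G : SimpleGraph (Fin M)}

def admissibleRows (ρ π : Perm (Fin M)) (i : Fin M) (P : Sym2 (Fin M)) : Finset (Fin M) :=
  {ρ i, ρ (i + 1)} \ P.toFinset.map π.toEmbedding

/-- In a witness `⟨(ρ, π), r⟩`, `ρ i` is the row of `o_i`, `π j` the row of `v_j`, and `r i P`
the row of `s_{i,P}`. -/
abbrev Witness (G : SimpleGraph (Fin M)) :=
  Σ p : Perm (Fin M) × Perm (Fin M), ∀ i (P : NonEdge G), admissibleRows p.1 p.2 i P.1

def Witness.columns (w : Witness G) : Col M G → Finset (Fin M)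
  | .o i => {w.1.1 i}
  | .v j => {w.1.2 j}
  | .b i => {w.1.1 i, w.1.1 (i + 1)}
  | .c P => P.1.toFinset.map w.1.2.toEmbedding
  | .s i P => {(w.2 i P : Fin M)}
  | .e i P => {(w.2 i P : Fin M)}ᶜ

lemma Witness.columns_injective : Function.Injective (Witness.columns (G := G)) := by
  rintro ⟨⟨ρ, π⟩, r⟩ ⟨⟨ρ', π'⟩, r'⟩ h
  obtain rfl : ρ = ρ' := Equiv.ext fun i => by simpa [columns] using congrFun h (.o i)
  obtain rfl : π = π' := Equiv.ext fun j => by simpa [columns] using congrFun h (.v j)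
  obtain rfl : r = r' := funext fun i => funext fun P => Subtype.ext <| by
    simpa [columns] using congrFun h (.s i P)
  rfl

lemma satisfies_of_column_eq (hM : 2 ≤ M) {D : Fin M → Col M G → Bool} (w : Witness G)
    (hD : column D = w.columns) : Satisfies M G D := by
  obtain ⟨⟨ρ, π⟩, r⟩ := w
  simp only [Satisfies, fr1_eq_card_column, fr2_eq_card_inter, hD, Witness.columns]
  refine ⟨?_, ?_, ?_, ?_, ?_, ?_, ?_, ?_, ?_, ?_, ?_, ?_, ?_, ?_⟩
  · simp
  · intro i j hij
    simp [singleton_inter_of_notMem, ρ.injective.ne hij]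
  · simp
  · intro i j hij
    simp [singleton_inter_of_notMem, π.injective.ne hij]
  · simp [ρ.injective.eq_iff, Fin.self_ne_add_one hM]
  · simp
  · simp
  · rintro ⟨P, hP⟩
    rw [card_map, Sym2.card_toFinset_of_not_isDiag _ hP]
  · rintro ⟨P, hP⟩ j hj
    simp [hj]
  · simp
  · intro i P
    rw [singleton_inter_of_mem (mem_sdiff.mp (r i P).2).1, card_singleton]
  · intro i P
    rw [singleton_inter_of_notMem (mem_sdiff.mp (r i P).2).2, card_empty]
  · simp [card_compl]
  · simp

lemma exists_column_eq_columns (hM : 2 ≤ M) {D : Fin M → Col M G → Bool}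
    (hD : Satisfies M G D) : ∃ w : Witness G, column D = w.columns := by
  simp only [Satisfies, fr1_eq_card_column, fr2_eq_card_inter] at hD
  obtain ⟨ho, hoo, hv, hvv, hb, hbo, hbo', hc, hcv, hs, hsb, hsc, he, hse⟩ := hD
  obtain ⟨ρ, hρ⟩ := exists_perm_of_card_eq_one (S := fun i => column D (.o i)) ho hoo
  obtain ⟨π, hπ⟩ := exists_perm_of_card_eq_one (S := fun j => column D (.v j)) hv hvv
  choose r hr using fun i P => card_eq_one.mp (hs i P)
  have hb_eq : ∀ i, column D (.b i) = {ρ i, ρ (i + 1)} := fun i =>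
    eq_pair_of_card_eq_two (hb i) (ρ.injective.ne (Fin.self_ne_add_one hM i))
      (mem_of_card_singleton_inter (by rw [inter_comm, ← hρ]; exact hbo i))
      (mem_of_card_singleton_inter (by rw [inter_comm, ← hρ]; exact hbo' i))
  have hc_eq : ∀ P, column D (.c P) = P.1.toFinset.map π.toEmbedding := by
    rintro ⟨P, hP⟩
    induction P using Sym2.ind with
    | _ x y =>
      rw [Sym2.toFinset_mk_eq, map_insert, map_singleton, coe_toEmbedding]
      refine eq_pair_of_card_eq_two (hc _) (π.injective.ne (by simpa using hP)) ?_ ?_ <;>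
        refine mem_of_card_singleton_inter ?_ <;> rw [inter_comm, ← hπ] <;>
        exact hcv _ _ (by simp)
  have hr_adm : ∀ i P, r i P ∈ admissibleRows ρ π i P.1 := fun i P => mem_sdiff.mpr
    ⟨hb_eq i ▸ mem_of_card_singleton_inter (hr i P ▸ hsb i P),
      hc_eq ⟨P.1, P.2.1⟩ ▸ notMem_of_card_singleton_inter (hr i P ▸ hsc i P)⟩
  refine ⟨⟨(ρ, π), fun i P => ⟨r i P, hr_adm i P⟩⟩, funext fun x => ?_⟩
  cases x with
  | o i => exact hρ i
  | v j => exact hπ j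
  | b i => exact hb_eq i
  | c P => exact hc_eq P
  | s i P => exact hr i P
  | e i P =>
    exact eq_compl_singleton_of_card (by rw [Fintype.card_fin]; exact he i P) (hr i P ▸ hse i P)

noncomputable def satisfiesEquivWitness (hM : 2 ≤ M) : {D // Satisfies M G D} ≃ Witness G :=
  (columnEquiv.subtypeEquiv fun _ =>
      ⟨fun hD => (exists_column_eq_columns hM hD).imp fun _ h => h.symm,
        fun ⟨w, hw⟩ => satisfies_of_column_eq hM w hw.symm⟩).trans
    (Equiv.ofInjective _ Witness.columns_injective).symm

end Datasets

section Counting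

variable {G : SimpleGraph (Fin M)} [DecidableRel G.Adj]

lemma card_admissibleRows (ρ π : Perm (Fin M)) (i : Fin M) (P : Sym2 (Fin M)) :
    #(admissibleRows ρ π i P) =
      #(({(π⁻¹ * ρ) i, (π⁻¹ * ρ) (i + 1)} : Finset (Fin M)) \ P.toFinset) := by
  rw [eq_comm, ← card_map π.toEmbedding, Finset.map_sdiff, admissibleRows]
  simp

lemma prod_nonEdge_prod_card (hM : 2 ≤ M) (σ : Perm (Fin M)) :
    ∏ P : NonEdge G, ∏ i, #(({σ i, σ (i + 1)} : Finset (Fin M)) \ P.1.toFinset) =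
      if IsHamiltonianOrder G σ then 2 ^ ((M - 4) * Fintype.card (NonEdge G)) else 0 := by
  split_ifs with hσ
  · have hP : ∀ P : NonEdge G, P.1 ∉ cycleEdges σ := fun P hP =>
      P.2.2 ((isHamiltonianOrder_iff_cycleEdges_subset G).mp hσ hP)
    rw [Fintype.prod_congr _ _ fun P => prod_card_sdiff_toFinset hM σ P.2.1 (hP P), prod_const,
      card_univ, ← pow_mul, mul_comm]
  · obtain ⟨i, hi⟩ := not_forall.mp hσ
    have hP : ¬ s(σ i, σ (i + 1)).IsDiag := not_isDiag_of_mem_cycleEdges hM ⟨i, rfl⟩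
    exact prod_eq_zero (mem_univ ⟨_, hP, hi⟩)
      (prod_eq_zero (mem_univ i) (by simp [Sym2.toFinset_mk_eq]))

lemma card_satisfies_eq_factorial_mul (hM : 2 ≤ M) :
    Nat.card {D // Satisfies M G D} =
      M.factorial * Nat.card {σ : Perm (Fin M) // IsHamiltonianOrder G σ} *
        2 ^ ((M - 4) * Fintype.card (NonEdge G)) := by
  rw [Nat.card_congr (satisfiesEquivWitness hM), Nat.card_eq_fintype_card, Fintype.card_sigma]
  simp only [Fintype.card_pi, Fintype.card_coe, card_admissibleRows]
  rw [Fintype.sum_prod_type_right]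
  simp_rw [prod_comm (s := (univ : Finset (Fin M))), prod_nonEdge_prod_card hM]
  set c := 2 ^ ((M - 4) * Fintype.card (NonEdge G))
  have hshift : ∀ π : Perm (Fin M), (∑ ρ, if IsHamiltonianOrder G ⇑(π⁻¹ * ρ) then c else 0) =
      ∑ σ : Perm (Fin M), if IsHamiltonianOrder G σ then c else 0 := fun π =>
    Equiv.sum_comp (Equiv.mulLeft π⁻¹) fun σ : Perm (Fin M) =>
      if IsHamiltonianOrder G σ then c else 0
  rw [Fintype.sum_congr _ _ hshift, sum_const, card_univ, Fintype.card_perm, Fintype.card_fin,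
    sum_ite, sum_const_zero, add_zero, sum_const, smul_eq_mul, smul_eq_mul,
    Nat.card_eq_fintype_card, Fintype.card_subtype, mul_assoc]

end Counting

lemma card_satisfies_eq_mul_card_hamiltonianCycle (G : SimpleGraph (Fin M)) [DecidableRel G.Adj]
    (hM : 3 ≤ M) :
    Nat.card {D // Satisfies M G D} = M.factorial * (2 * M) *
      2 ^ ((M - 4) * (M * (M - 1) / 2 - #G.edgeFinset)) * Nat.card (HamiltonianCycle G) := by
  rw [card_satisfies_eq_factorial_mul (by omega), card_isHamiltonianOrder G hM, card_nonEdge]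
  ring

end HamiltonianReduction

/-- The total number of 0–1 datasets with `M` rows satisfying all
the constraints of the Hamiltonian-cycle reduction for `G` equals
`M! · 2M · 2^((M−4)·L)` times the number of Hamiltonian cycles of `G` (where
`L = M(M−1)/2 − N`, with `N` the number of edges of `G`); in particular a dataset
satisfying the constraints exists iff `G` has a Hamiltonian cycle. -/
theorem total_count_of_datasets (M : ℕ) [NeZero M] (hM : 3 ≤ M)
    (G : SimpleGraph (Fin M)) [DecidableRel G.Adj] :
    Nat.card {D : Fin M → Col M G → Bool // Satisfies M G D} =
      Nat.factorial M * (2 * M) *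
        2 ^ ((M - 4) * (M * (M - 1) / 2 - G.edgeFinset.card)) *
        Nat.card {H : SimpleGraph (Fin M) // H ≤ G ∧
          ∃ σ : Fin M → Fin M, Function.Bijective σ ∧
            H.edgeSet = {P : Sym2 (Fin M) | ∃ i : Fin M, P = Sym2.mk (σ i) (σ (i + 1))}} ∧
    ((∃ D : Fin M → Col M G → Bool, Satisfies M G D) ↔
      (∃ H : SimpleGraph (Fin M), H ≤ G ∧
        ∃ σ : Fin M → Fin M, Function.Bijective σ ∧
          H.edgeSet = {P : Sym2 (Fin M) | ∃ i : Fin M, P = Sym2.mk (σ i) (σ (i + 1))})) := by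
  have hcount := HamiltonianReduction.card_satisfies_eq_mul_card_hamiltonianCycle G hM
  have : Finite {D // Satisfies M G D} :=
    Finite.of_equiv _ (HamiltonianReduction.satisfiesEquivWitness (by omega)).symm
  refine ⟨hcount, ?_⟩
  rw [← nonempty_subtype, ← nonempty_subtype, ← Finite.card_pos_iff, ← Finite.card_pos_iff,
    hcount]
  exact mul_pos_iff_of_pos_left (by positivity)
end
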